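/- arXiv:2507.11650 — 4 statements merged into one kernel-verified Lean document; each statement's English description precedes it below -/
import Mathlib

section
/- Fix integers d_1,…,d_s ≥ 0 and let F = ⊕_{i=1}^s F^{FI,d_i} be a free FI-module over an FI-algebra A over a commutative ring K. Then the restriction F|_OI is isomorphic, as an OI-module over A|_OI, to ⊕_{i=1}^s (F^{OI,d_i})^{⊕ d_i!}; in particular, F|_OI is a free OI-module of rank Σ_{i=1}^s d_i!. -/
/-!
Every injection `π : [k] ↪ [n]` factors uniquely as a permutation of `[k]` followed by an
order-preserving injection: the permutation is the one sorting the values of `π`. Composing `π`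
with an order-preserving `ε` leaves the sorting permutation unchanged, so
`Hom_FI([k],[n]) ≃ S_k × Hom_OI([k],[n])` is compatible with the OI-action. Numbering `S_k` by
`[k!]` turns the FI-basis of `F` into the OI-basis of `⊕ (F^{OI,d_i})^{⊕ d_i!}`, and reindexing
coordinates along this bijection is the required isomorphism.
-/

/-- The index type of the free FI-module `F = ⊕_{i=1}^s F^{FI,d_i}` in width `n`:
pairs `(i, π)` with `π ∈ Hom_FI([d_i],[n])`. -/
abbrev FIIdx {s : ℕ} (d : Fin s → ℕ) (n : ℕ) : Type := Σ i : Fin s, Fin (d i) ↪ Fin n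

/-- The index type of the free OI-module `⊕_{i=1}^s (F^{OI,d_i})^{⊕ d_i!}` in width
`n`: triples `(i, j, π)` with `j ∈ [d_i!]` and `π ∈ Hom_OI([d_i],[n])`. -/
abbrev OIIdx {s : ℕ} (d : Fin s → ℕ) (n : ℕ) : Type :=
  Σ i : Fin s, Fin (d i).factorial × (Fin (d i) ↪o Fin n)

/-- Width-`n` component of the free FI-module `F = ⊕_{i=1}^s F^{FI,d_i}` over an
FI-algebra `A`: the free `A n`-module `⊕_{(i,π)} A n · e_{π,i}`. -/
abbrev FreeFI (A : ℕ → Type) [∀ n, CommRing (A n)] {s : ℕ} (d : Fin s → ℕ)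
    (n : ℕ) : Type := FIIdx d n →₀ A n

/-- Width-`n` component of the free OI-module `⊕_{i=1}^s (F^{OI,d_i})^{⊕ d_i!}`. -/
abbrev FreeOI (A : ℕ → Type) [∀ n, CommRing (A n)] {s : ℕ} (d : Fin s → ℕ)
    (n : ℕ) : Type := OIIdx d n →₀ A n

/-- The structure map of the free FI-module `⊕ F^{FI,d_i}` along an FI-morphism
`ε : [m] ↪ [n]`: `a e_{π,i} ↦ A(ε)(a) e_{ε∘π,i}`. -/
noncomputable def freeFIMap {K : Type} [CommRing K] (A : ℕ → Type)
    [∀ n, CommRing (A n)] [∀ n, Algebra K (A n)]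
    (Amap : ∀ {m n : ℕ}, (Fin m ↪ Fin n) → (A m →ₐ[K] A n))
    {s : ℕ} (d : Fin s → ℕ) {m n : ℕ} (ε : Fin m ↪ Fin n)
    (f : FreeFI A d m) : FreeFI A d n :=
  f.sum fun p a => Finsupp.single ⟨p.1, p.2.trans ε⟩ (Amap ε a)

/-- The structure map of the free OI-module `⊕ (F^{OI,d_i})^{⊕ d_i!}` (over the
restriction `A|_OI`) along an OI-morphism `ε : [m] ↪o [n]`. -/
noncomputable def freeOIMap {K : Type} [CommRing K] (A : ℕ → Type)
    [∀ n, CommRing (A n)] [∀ n, Algebra K (A n)]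
    (Amap : ∀ {m n : ℕ}, (Fin m ↪ Fin n) → (A m →ₐ[K] A n))
    {s : ℕ} (d : Fin s → ℕ) {m n : ℕ} (ε : Fin m ↪o Fin n)
    (f : FreeOI A d m) : FreeOI A d n :=
  f.sum fun p a => Finsupp.single ⟨p.1, (p.2.1, p.2.2.trans ε)⟩ (Amap ε.toEmbedding a)

namespace Tuple

variable {α : Type*} [LinearOrder α] {k : ℕ}

theorem eq_sort_iff_of_injective {f : Fin k → α} (hf : Function.Injective f)
    {σ : Equiv.Perm (Fin k)} : σ = sort f ↔ Monotone (f ∘ σ) := by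
  refine eq_sort_iff.trans ⟨And.left, fun h => ⟨h, fun i j hij hfij => ?_⟩⟩
  exact absurd (σ.injective (hf hfij)) hij.ne

theorem sort_comp_of_strictMono {β : Type*} [LinearOrder β] {f : Fin k → α}
    (hf : Function.Injective f) {g : α → β} (hg : StrictMono g) : sort (g ∘ f) = sort f :=
  ((eq_sort_iff_of_injective (hg.injective.comp hf)).2
    (hg.monotone.comp (monotone_sort f))).symm

end Tuple

namespace Fin

variable {k m n : ℕ}

def embeddingEquivPermProdOrderEmbedding :
    (Fin k ↪ Fin n) ≃ Equiv.Perm (Fin k) × (Fin k ↪o Fin n) where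
  toFun π := (Tuple.sort π, OrderEmbedding.ofStrictMono (π ∘ Tuple.sort π)
    ((Tuple.monotone_sort π).strictMono_of_injective (π.injective.comp (Equiv.injective _))))
  invFun p := p.1.symm.toEmbedding.trans p.2.toEmbedding
  left_inv π := by ext; simp
  right_inv := by
    rintro ⟨σ, τ⟩
    have hσ : σ = Tuple.sort (σ.symm.toEmbedding.trans τ.toEmbedding) :=
      (Tuple.eq_sort_iff_of_injective (τ.injective.comp σ.symm.injective)).2
        (by simpa [Function.comp_assoc] using τ.monotone)
    ext <;> simp [← hσ]

theorem embeddingEquivPermProdOrderEmbedding_trans (π : Fin k ↪ Fin m) (ε : Fin m ↪o Fin n) :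
    embeddingEquivPermProdOrderEmbedding (π.trans ε.toEmbedding) =
      ((embeddingEquivPermProdOrderEmbedding π).1,
        (embeddingEquivPermProdOrderEmbedding π).2.trans ε) := by
  have hsort : Tuple.sort (π.trans ε.toEmbedding) = Tuple.sort π :=
    Tuple.sort_comp_of_strictMono π.injective ε.strictMono
  ext <;> simp [embeddingEquivPermProdOrderEmbedding, hsort]

end Fin

theorem Finsupp.equivMapDomain_sum_single {α β α' β' M N : Type*} [Zero M] [AddCommMonoid N]
    (e : α ≃ β) (e' : α' ≃ β') {g : α → α'} {g' : β → β'}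
    (h : ∀ p, e' (g p) = g' (e p)) (φ : M → N) (f : α →₀ M) :
    equivMapDomain e' (f.sum fun p a => single (g p) (φ a)) =
      (equivMapDomain e f).sum fun q a => single (g' q) (φ a) := by
  rw [sum_equivMapDomain, ← domCongr_apply, map_finsuppSum]
  simp [h]

noncomputable def fiIdxEquivOIIdx {s : ℕ} (d : Fin s → ℕ) (n : ℕ) : FIIdx d n ≃ OIIdx d n :=
  Equiv.sigmaCongrRight fun i => Fin.embeddingEquivPermProdOrderEmbedding.trans
    ((Fintype.equivFinOfCardEq (by simp [Fintype.card_perm])).prodCongr (Equiv.refl _))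

theorem fiIdxEquivOIIdx_trans {s : ℕ} (d : Fin s → ℕ) {m n : ℕ} (ε : Fin m ↪o Fin n)
    (p : FIIdx d m) :
    fiIdxEquivOIIdx d n ⟨p.1, p.2.trans ε.toEmbedding⟩ =
      ⟨p.1, ((fiIdxEquivOIIdx d m p).2.1, (fiIdxEquivOIIdx d m p).2.2.trans ε)⟩ := by
  obtain ⟨i, π⟩ := p
  simp only [fiIdxEquivOIIdx, Equiv.sigmaCongrRight_apply, Equiv.trans_apply,
    Fin.embeddingEquivPermProdOrderEmbedding_trans]
  rfl

theorem stmt_6_general {K : Type} [CommRing K] (A : ℕ → Type)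
    [∀ n, CommRing (A n)] [∀ n, Algebra K (A n)]
    (Amap : ∀ {m n : ℕ}, (Fin m ↪ Fin n) → (A m →ₐ[K] A n))
    {s : ℕ} (d : Fin s → ℕ) :
    ∃ e : ∀ n, FreeFI A d n ≃ₗ[A n] FreeOI A d n,
      ∀ (m n : ℕ) (ε : Fin m ↪o Fin n) (x : FreeFI A d m),
        e n (freeFIMap A Amap d ε.toEmbedding x) = freeOIMap A Amap d ε (e m x) := by
  refine ⟨fun n => Finsupp.domLCongr (fiIdxEquivOIIdx d n), fun m n ε x => ?_⟩
  simp only [Finsupp.domLCongr_apply, freeFIMap, freeOIMap]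
  exact Finsupp.equivMapDomain_sum_single _ _ (fiIdxEquivOIIdx_trans d ε) _ x

/-- Fix integers `d_1, …, d_s ≥ 0` and let `F = ⊕_{i=1}^s F^{FI,d_i}`
be a free FI-module over an FI-algebra `A` over a commutative ring `K`. Then the
restriction `F|_OI` is isomorphic, as an OI-module over `A|_OI`, to
`⊕_{i=1}^s (F^{OI,d_i})^{⊕ d_i!}`: there is a family of `A n`-linear isomorphisms
in every width commuting with the OI-structure maps. In particular `F|_OI` is a
free OI-module of rank `Σ_{i=1}^s d_i!`. -/
theorem stmt_6 {K : Type} [CommRing K] (A : ℕ → Type)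
    [∀ n, CommRing (A n)] [∀ n, Algebra K (A n)]
    (Amap : ∀ {m n : ℕ}, (Fin m ↪ Fin n) → (A m →ₐ[K] A n))
    (hid : ∀ (n : ℕ) (a : A n), Amap (Function.Embedding.refl (Fin n)) a = a)
    (hcomp : ∀ {m n p : ℕ} (ε : Fin m ↪ Fin n) (δ : Fin n ↪ Fin p) (a : A m),
      Amap (ε.trans δ) a = Amap δ (Amap ε a))
    {s : ℕ} (d : Fin s → ℕ) :
    ∃ e : ∀ n, FreeFI A d n ≃ₗ[A n] FreeOI A d n,
      ∀ (m n : ℕ) (ε : Fin m ↪o Fin n) (x : FreeFI A d m),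
        e n (freeFIMap A Amap d ε.toEmbedding x) = freeOIMap A Amap d ε (e m x) :=
  stmt_6_general A Amap d
end

section
/- Let A be an OI-algebra over a commutative ring K with colimit 𝒜 = lim A. For every integer d ≥ 0, the colimit of the free OI-module F^{OI,d} over A is isomorphic, as an Inc-module over 𝒜, to the free Inc-module F^{Inc,d} over 𝒜, via the map sending the class [a e_π] (for a ∈ A_n and π an OI-morphism [d] → [n]) to [a] ε_{π̃}, where π̃: [d] → ℕ is π followed by the inclusion [n] ↪ ℕ. -/
/-!
The comparison map `λ_n` applies `κ_n` coordinatewise and relabels the basis along `π ↦ π̃`,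
which is injective, so every colimit property of the free modules reduces to the same property
of `𝒜 = lim A`, one coordinate at a time. Joint surjectivity holds because each `π̃` and each
element of `𝒜` already occur at some finite width. If `λ_m f = λ_n g`, then after pushing
both to width `max m n` their coordinates have equal images in `𝒜`, so each of the finitely many
nonzero coordinates is equalized at some larger width, and one width works for all of them.
-/

/-- The monoid `Inc` of strictly increasing maps `ℕ → ℕ`, under composition. -/
def Inc : Type := {f : ℕ → ℕ // StrictMono f}

instance : Monoid Inc where
  mul σ τ := ⟨σ.1 ∘ τ.1, σ.2.comp τ.2⟩
  one := ⟨id, strictMono_id⟩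
  mul_assoc _ _ _ := rfl
  one_mul _ := rfl
  mul_one _ := rfl

/-- `Hom_OI([d], ℕ)`: strictly increasing maps `[d] → ℕ`. -/
def OIHomNat (d : ℕ) : Type := {π : Fin d → ℕ // StrictMono π}

/-- The action of `Inc` on `Hom_OI([d], ℕ)` by composition. -/
def incAct {d : ℕ} (τ : Inc) (π : OIHomNat d) : OIHomNat d :=
  ⟨τ.1 ∘ π.1, τ.2.comp π.2⟩

/-- The identity OI-morphism `[n] → [n]`. -/
def oeId (n : ℕ) : Fin n ↪o Fin n := OrderEmbedding.ofStrictMono id strictMono_id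

/-- The inclusion OI-morphism `ι_{m,n} : [m] → [n]`, `j ↦ j`, for `m ≤ n`. -/
def oeLE {m n : ℕ} (h : m ≤ n) : Fin m ↪o Fin n := Fin.castLEOrderEmb h

/-- The width `τ(n)` of the target of the OI-morphism `τ·id_n` induced by `τ ∈ Inc`
(in 0-based indexing: `[n] = {0,…,n-1}` is mapped into `{0,…,τ(n-1)}`). -/
def incWidth (τ : Inc) : ℕ → ℕ
  | 0 => 0
  | n + 1 => τ.1 n + 1

/-- The OI-morphism `τ·id_n : [n] → [τ(n)]`, `j ↦ τ(j)`, induced by `τ ∈ Inc`. -/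
def incRestrict (τ : Inc) (n : ℕ) : Fin n ↪o Fin (incWidth τ n) :=
  OrderEmbedding.ofStrictMono
    (fun j => ⟨τ.1 j, by
      cases n with
      | zero => exact absurd j.isLt (Nat.not_lt_zero _)
      | succ k => exact Nat.lt_succ_of_le (τ.2.le_iff_le.mpr (Nat.lt_succ_iff.mp j.isLt))⟩)
    (fun a b hab => by exact τ.2 (show (a : ℕ) < b from hab))

/-- The extension `π̃ : [d] → ℕ` of an OI-morphism `π : [d] → [n]` along the
inclusion `[n] ↪ ℕ`. -/
def extendHom {d n : ℕ} (π : Fin d ↪o Fin n) : OIHomNat d :=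
  ⟨fun j => (π j : ℕ), fun _ _ h => π.strictMono h⟩

theorem Finsupp.sum_single_sum_single {α β γ M N P : Type*}
    [AddCommMonoid M] [AddCommMonoid N] [AddCommMonoid P] {F G : Type*}
    [FunLike F M N] [ZeroHomClass F M N] [FunLike G N P] [AddMonoidHomClass G N P]
    (e₁ : α → β) (φ₁ : F) (e₂ : β → γ) (φ₂ : G) (f : α →₀ M) :
    ((f.sum fun a m => single (e₁ a) (φ₁ m)).sum fun b n => single (e₂ b) (φ₂ n)) =
      f.sum fun a m => single (e₂ (e₁ a)) (φ₂ (φ₁ m)) := by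
  rw [sum_sum_index (fun _ => by simp) (fun _ _ _ => by simp [single_add])]
  exact sum_congr fun a _ => sum_single_index (by simp)

theorem extendHom_injective {d n : ℕ} : Function.Injective (extendHom (d := d) (n := n)) :=
  fun _ _ h => DFunLike.ext _ _ fun j => Fin.ext (congrFun (congrArg Subtype.val h) j)

theorem oeLE_trans {m n p : ℕ} (h₁ : m ≤ n) (h₂ : n ≤ p) :
    (oeLE h₁).trans (oeLE h₂) = oeLE (h₁.trans h₂) :=
  rfl

theorem eventually_exists_extendHom_eq {d : ℕ} (π : OIHomNat d) :
    ∀ᶠ n in Filter.atTop, ∃ π' : Fin d ↪o Fin n, extendHom π' = π := by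
  filter_upwards [Filter.eventually_all.2 fun j => Filter.eventually_gt_atTop (π.1 j)] with n hn
  exact ⟨OrderEmbedding.ofStrictMono (fun j => ⟨π.1 j, hn j⟩) fun _ _ h => π.2 h, rfl⟩

namespace FreeOI

open Filter Finsupp

variable {d : ℕ}

/-- The structure map `F^{OI,d}(ε) : a e_π ↦ φ(a) e_{ε ∘ π}`, with `φ` in the role of `A(ε)`. -/
noncomputable def map {R S F : Type*} [AddCommMonoid R] [AddCommMonoid S] [FunLike F R S]
    {m n : ℕ} (ε : Fin m ↪o Fin n) (φ : F) (f : (Fin d ↪o Fin m) →₀ R) :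
    (Fin d ↪o Fin n) →₀ S :=
  f.sum fun π a => single (π.trans ε) (φ a)

section map

variable {R S T F G H : Type*} [AddCommMonoid R] [AddCommMonoid S] [AddCommMonoid T]
  [FunLike F R S] [AddMonoidHomClass F R S] [FunLike G S T] [AddMonoidHomClass G S T]
  [FunLike H R T]

theorem map_congr {m n : ℕ} (ε : Fin m ↪o Fin n) (φ : F) {f g : (Fin d ↪o Fin m) →₀ R}
    (hfg : ∀ π, φ (f π) = φ (g π)) : map ε φ f = map ε φ g := by
  have hmap : ∀ f : (Fin d ↪o Fin m) →₀ R,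
      map ε φ f = (f.mapRange φ (map_zero φ)).sum fun π b => single (π.trans ε) b :=
    fun f => (sum_mapRange_index fun _ => single_zero _).symm
  rw [hmap, hmap, show f.mapRange φ (map_zero φ) = g.mapRange φ (map_zero φ) from
    ext fun π => by simpa using hfg π]

theorem map_map {m n p : ℕ} (ε : Fin m ↪o Fin n) (δ : Fin n ↪o Fin p)
    (φ : F) (ψ : G) (χ : H)
    (hχ : ∀ a, χ a = ψ (φ a)) (f : (Fin d ↪o Fin m) →₀ R) :
    map δ ψ (map ε φ f) = map (ε.trans δ) χ f := by
  simp only [map, sum_single_sum_single, hχ]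
  rfl

end map

/-- The comparison map `λ_n : F^{OI,d}_n → F^{Inc,d}`, `a e_π ↦ κ_n(a) ε_{π̃}`. -/
noncomputable def toInc {K : Type*} [CommRing K] {A : ℕ → Type*} [∀ n, CommRing (A n)]
    [∀ n, Algebra K (A n)] {𝒜 : Type*} [CommRing 𝒜] [Algebra K 𝒜] (κ : ∀ n, A n →ₐ[K] 𝒜)
    (n : ℕ)
    (f : (Fin d ↪o Fin n) →₀ A n) : OIHomNat d →₀ 𝒜 :=
  f.sum fun π a => single (extendHom π) (κ n a)

variable {K : Type*} [CommRing K] {A : ℕ → Type*} [∀ n, CommRing (A n)]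
  [∀ n, Algebra K (A n)]
  {𝒜 : Type*} [CommRing 𝒜] [Algebra K 𝒜] (κ : ∀ n, A n →ₐ[K] 𝒜)
  {Amap : ∀ {m n : ℕ}, (Fin m ↪o Fin n) → (A m →ₐ[K] A n)}

theorem toInc_add (n : ℕ) (f g : (Fin d ↪o Fin n) →₀ A n) :
    toInc κ n (f + g) = toInc κ n f + toInc κ n g :=
  sum_add_index' (fun _ => by simp) fun _ _ _ => by simp [single_add]

theorem toInc_smul (n : ℕ) (a : A n) (f : (Fin d ↪o Fin n) →₀ A n) :
    toInc κ n (a • f) = κ n a • toInc κ n f := by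
  rw [toInc, toInc, smul_sum, sum_smul_index' fun _ => by simp]
  exact sum_congr fun π _ => by rw [smul_eq_mul, map_mul, smul_single']

theorem toInc_single (n : ℕ) (π : Fin d ↪o Fin n) (a : A n) :
    toInc κ n (single π a) = single (extendHom π) (κ n a) :=
  sum_single_index (by simp)

theorem toInc_apply_extendHom (n : ℕ) (f : (Fin d ↪o Fin n) →₀ A n)
    (π : Fin d ↪o Fin n) :
    toInc κ n f (extendHom π) = κ n (f π) := by
  classical
  simp +contextual [toInc, Finsupp.sum_apply, single_apply, extendHom_injective.eq_iff]

theorem toInc_map {m n : ℕ} {G : Type*} [FunLike G 𝒜 𝒜] [AddMonoidHomClass G 𝒜 𝒜]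
    (ε : Fin m ↪o Fin n) (φ : A m →ₐ[K] A n) (e : OIHomNat d → OIHomNat d) (ψ : G)
    (he : ∀ π, extendHom (π.trans ε) = e (extendHom π))
    (hψ : ∀ a, ψ (κ m a) = κ n (φ a))
    (f : (Fin d ↪o Fin m) →₀ A m) :
    toInc κ n (map ε φ f) = (toInc κ m f).sum fun π a => single (e π) (ψ a) := by
  simp only [toInc, map, sum_single_sum_single, he, ← hψ]

theorem toInc_map_oeLE
    (hκ : ∀ {m n : ℕ} (h : m ≤ n) (a : A m), κ n (Amap (oeLE h) a) = κ m a)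
    {m n : ℕ} (h : m ≤ n) (f : (Fin d ↪o Fin m) →₀ A m) :
    toInc κ n (map (oeLE h) (Amap (oeLE h)) f) = toInc κ m f :=
  (toInc_map κ _ _ id (AlgHom.id K 𝒜) (fun _ => rfl) (fun a => (hκ h a).symm) f).trans
    (sum_single _)

theorem map_oeLE_map_oeLE
    (hAcomp : ∀ {m n p : ℕ} (ε : Fin m ↪o Fin n) (δ : Fin n ↪o Fin p) (a : A m),
      Amap (ε.trans δ) a = Amap δ (Amap ε a))
    {m n p : ℕ} (h₁ : m ≤ n) (h₂ : n ≤ p) (f : (Fin d ↪o Fin m) →₀ A m) :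
    map (oeLE h₂) (Amap (oeLE h₂)) (map (oeLE h₁) (Amap (oeLE h₁)) f) =
      map (oeLE (h₁.trans h₂)) (Amap (oeLE (h₁.trans h₂))) f :=
  map_map _ _ _ _ _ (hAcomp _ _) f

theorem eventually_Amap_oeLE_eq
    (hAcomp : ∀ {m n p : ℕ} (ε : Fin m ↪o Fin n) (δ : Fin n ↪o Fin p) (a : A m),
      Amap (ε.trans δ) a = Amap δ (Amap ε a))
    (hκeq : ∀ {n : ℕ} (a b : A n), κ n a = κ n b →
      ∃ (p : ℕ) (h : n ≤ p), Amap (oeLE h) a = Amap (oeLE h) b)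
    {n : ℕ} {a b : A n} (hab : κ n a = κ n b) :
    ∀ᶠ p in atTop, ∀ h : n ≤ p, Amap (oeLE h) a = Amap (oeLE h) b := by
  obtain ⟨q, hnq, hq⟩ := hκeq a b hab
  filter_upwards [eventually_ge_atTop q] with p hqp h
  rw [← oeLE_trans hnq hqp, hAcomp, hAcomp, hq]

theorem eventually_map_oeLE_eq
    (hAcomp : ∀ {m n p : ℕ} (ε : Fin m ↪o Fin n) (δ : Fin n ↪o Fin p) (a : A m),
      Amap (ε.trans δ) a = Amap δ (Amap ε a))
    (hκeq : ∀ {n : ℕ} (a b : A n), κ n a = κ n b →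
      ∃ (p : ℕ) (h : n ≤ p), Amap (oeLE h) a = Amap (oeLE h) b)
    {n : ℕ} {f g : (Fin d ↪o Fin n) →₀ A n} (hfg : ∀ π, κ n (f π) = κ n (g π)) :
    ∀ᶠ p in atTop, ∀ h : n ≤ p,
      map (oeLE h) (Amap (oeLE h)) f = map (oeLE h) (Amap (oeLE h)) g := by
  classical
  filter_upwards [(eventually_all_finset (f.support ∪ g.support)).2 fun π _ =>
    eventually_Amap_oeLE_eq κ hAcomp hκeq (hfg π)] with p hp h
  refine map_congr _ _ fun π => ?_
  by_cases hπ : π ∈ f.support ∪ g.support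
  · exact hp π hπ h
  · simp_all

theorem toInc_eq_toInc_iff
    (hκ : ∀ {m n : ℕ} (h : m ≤ n) (a : A m), κ n (Amap (oeLE h) a) = κ m a)
    (hAcomp : ∀ {m n p : ℕ} (ε : Fin m ↪o Fin n) (δ : Fin n ↪o Fin p) (a : A m),
      Amap (ε.trans δ) a = Amap δ (Amap ε a))
    (hκeq : ∀ {n : ℕ} (a b : A n), κ n a = κ n b →
      ∃ (p : ℕ) (h : n ≤ p), Amap (oeLE h) a = Amap (oeLE h) b)
    {m n : ℕ} (f : (Fin d ↪o Fin m) →₀ A m) (g : (Fin d ↪o Fin n) →₀ A n) :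
    toInc κ m f = toInc κ n g ↔ ∃ (p : ℕ) (h₁ : m ≤ p) (h₂ : n ≤ p),
      map (oeLE h₁) (Amap (oeLE h₁)) f = map (oeLE h₂) (Amap (oeLE h₂)) g := by
  refine ⟨fun hfg => ?_, fun ⟨p, h₁, h₂, hp⟩ => by
    rw [← toInc_map_oeLE κ hκ h₁, hp, toInc_map_oeLE κ hκ h₂]⟩
  have hm := le_max_left m n
  have hn := le_max_right m n
  have hκ_eq : ∀ π, κ _ (map (oeLE hm) (Amap (oeLE hm)) f π) =
      κ _ (map (oeLE hn) (Amap (oeLE hn)) g π) := fun π => by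
    rw [← toInc_apply_extendHom, ← toInc_apply_extendHom, toInc_map_oeLE κ hκ,
      toInc_map_oeLE κ hκ, hfg]
  obtain ⟨p, hp, hNp⟩ :=
    ((eventually_map_oeLE_eq κ hAcomp hκeq hκ_eq).and (eventually_ge_atTop _)).exists
  refine ⟨p, hm.trans hNp, hn.trans hNp, ?_⟩
  rw [← map_oeLE_map_oeLE hAcomp hm hNp, ← map_oeLE_map_oeLE hAcomp hn hNp, hp hNp]

theorem eventually_exists_toInc_eq
    (hκ : ∀ {m n : ℕ} (h : m ≤ n) (a : A m), κ n (Amap (oeLE h) a) = κ m a)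
    (hκsurj : ∀ x : 𝒜, ∃ (n : ℕ) (a : A n), κ n a = x) (y : OIHomNat d →₀ 𝒜) :
    ∀ᶠ n in atTop, ∃ f : (Fin d ↪o Fin n) →₀ A n, toInc κ n f = y := by
  induction y using Finsupp.induction_linear with
  | zero => exact Eventually.of_forall fun n => ⟨0, sum_zero_index⟩
  | add y₁ y₂ h₁ h₂ =>
    filter_upwards [h₁, h₂] with n ⟨f₁, hf₁⟩ ⟨f₂, hf₂⟩
    exact ⟨f₁ + f₂, by rw [toInc_add, hf₁, hf₂]⟩
  | single π c =>
    obtain ⟨m, a, rfl⟩ := hκsurj c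
    filter_upwards [eventually_exists_extendHom_eq π, eventually_ge_atTop m]
      with n ⟨π', hπ'⟩ hmn
    exact ⟨single π' (Amap (oeLE hmn) a), by rw [toInc_single, hπ', hκ]⟩

end FreeOI

theorem stmt_13_general {K : Type} [CommRing K]
    (A : ℕ → Type) [∀ n, CommRing (A n)] [∀ n, Algebra K (A n)]
    (Amap : ∀ {m n : ℕ}, (Fin m ↪o Fin n) → (A m →ₐ[K] A n))
    (hAcomp : ∀ {m n p : ℕ} (ε : Fin m ↪o Fin n) (δ : Fin n ↪o Fin p) (a : A m),
      Amap (ε.trans δ) a = Amap δ (Amap ε a))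
    -- the colimit Inc-algebra `𝒜 = lim A`
    (𝒜 : Type) [CommRing 𝒜] [Algebra K 𝒜] (κ : ∀ n, A n →ₐ[K] 𝒜)
    (hκ : ∀ {m n : ℕ} (h : m ≤ n) (a : A m), κ n (Amap (oeLE h) a) = κ m a)
    (hκsurj : ∀ x : 𝒜, ∃ (n : ℕ) (a : A n), κ n a = x)
    (hκeq : ∀ {m n : ℕ} (a : A m) (b : A n), κ m a = κ n b ↔
      ∃ (p : ℕ) (h₁ : m ≤ p) (h₂ : n ≤ p), Amap (oeLE h₁) a = Amap (oeLE h₂) b)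
    (actA : Inc → (𝒜 →ₐ[K] 𝒜))
    (hactA : ∀ (τ : Inc) (n : ℕ) (a : A n),
      actA τ (κ n a) = κ (incWidth τ n) (Amap (incRestrict τ n) a))
    (d : ℕ) :
    -- the comparison maps `λ n : F^{OI,d}_n → F^{Inc,d}`, `a e_π ↦ [a] ε_{π̃}` ...
    ∀ lam : ∀ n, ((Fin d ↪o Fin n) →₀ A n) → (OIHomNat d →₀ 𝒜),
      (∀ (n : ℕ) (f : (Fin d ↪o Fin n) →₀ A n),
        lam n f = f.sum fun π a => Finsupp.single (extendHom π) (κ n a)) →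
      -- ... are additive and `A n`-semilinear over `κ n`,
      (∀ (n : ℕ) (f g : (Fin d ↪o Fin n) →₀ A n), lam n (f + g) = lam n f + lam n g) ∧
      (∀ (n : ℕ) (a : A n) (f : (Fin d ↪o Fin n) →₀ A n),
        lam n (a • f) = κ n a • lam n f) ∧
      -- commute with the OI-structure maps of `F^{OI,d}` (cocone compatibility),
      (∀ (m n : ℕ) (h : m ≤ n) (f : (Fin d ↪o Fin m) →₀ A m),
        lam n (f.sum fun π a => Finsupp.single (π.trans (oeLE h)) (Amap (oeLE h) a))
          = lam m f) ∧
      -- are jointly surjective,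
      (∀ y : OIHomNat d →₀ 𝒜, ∃ (n : ℕ) (f : (Fin d ↪o Fin n) →₀ A n), lam n f = y) ∧
      -- identify two elements exactly when they agree in a common width,
      (∀ (m n : ℕ) (f : (Fin d ↪o Fin m) →₀ A m) (g : (Fin d ↪o Fin n) →₀ A n),
        lam m f = lam n g ↔ ∃ (p : ℕ) (h₁ : m ≤ p) (h₂ : n ≤ p),
          (f.sum fun π a => Finsupp.single (π.trans (oeLE h₁)) (Amap (oeLE h₁) a))
            = (g.sum fun π a => Finsupp.single (π.trans (oeLE h₂)) (Amap (oeLE h₂) a))) ∧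
      -- and intertwine the OI-structure maps along `τ·id_n` with the Inc-action
      -- `τ·(a ε_π) = (τ·a) ε_{τ∘π}` of `F^{Inc,d}`:
      (∀ (τ : Inc) (n : ℕ) (f : (Fin d ↪o Fin n) →₀ A n),
        ((lam n f).sum fun π a => Finsupp.single (incAct τ π) (actA τ a))
          = lam (incWidth τ n)
              (f.sum fun π a =>
                Finsupp.single (π.trans (incRestrict τ n)) (Amap (incRestrict τ n) a))) := by
  intro lam hlam
  obtain rfl : lam = FreeOI.toInc κ := funext fun n => funext (hlam n)
  have hκeq' : ∀ {n : ℕ} (a b : A n), κ n a = κ n b →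
      ∃ (p : ℕ) (h : n ≤ p), Amap (oeLE h) a = Amap (oeLE h) b := fun a b hab => by
    obtain ⟨p, h, _, hp⟩ := (hκeq a b).1 hab
    exact ⟨p, h, hp⟩
  exact ⟨FreeOI.toInc_add κ, FreeOI.toInc_smul κ, fun m n h => FreeOI.toInc_map_oeLE κ hκ h,
    fun y => (FreeOI.eventually_exists_toInc_eq κ hκ hκsurj y).exists,
    fun m n => FreeOI.toInc_eq_toInc_iff κ hκ hAcomp hκeq',
    fun τ n f => (FreeOI.toInc_map κ _ _ _ (actA τ) (fun _ => rfl) (hactA τ n) f).symm⟩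

/-- Let `A` be an OI-algebra over a commutative ring `K` with
colimit `𝒜 = lim A` (an Inc-algebra via `τ·[a] = [A(τ·id_n)(a)]`). For every
`d ≥ 0`, the colimit of the free OI-module `F^{OI,d}` over `A` is isomorphic, as an
Inc-module over `𝒜`, to the free Inc-module `F^{Inc,d} = ⊕_{π ∈ Hom_OI(d,ℕ)} 𝒜 ε_π`
via `[a e_π] ↦ [a] ε_{π̃}`. Concretely: the maps
`λ n : F^{OI,d}_n → F^{Inc,d}`, `a e_π ↦ κ n (a) ε_{π̃}`, are additive, `A n`-linear
over `κ n`, Inc-equivariant, and present `F^{Inc,d}` as the colimit of `F^{OI,d}`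
(they are compatible, jointly surjective, and identify two elements exactly when
they agree in a common width). -/
theorem stmt_13 {K : Type} [CommRing K]
    (A : ℕ → Type) [∀ n, CommRing (A n)] [∀ n, Algebra K (A n)]
    (Amap : ∀ {m n : ℕ}, (Fin m ↪o Fin n) → (A m →ₐ[K] A n))
    (hAid : ∀ (n : ℕ) (a : A n), Amap (oeId n) a = a)
    (hAcomp : ∀ {m n p : ℕ} (ε : Fin m ↪o Fin n) (δ : Fin n ↪o Fin p) (a : A m),
      Amap (ε.trans δ) a = Amap δ (Amap ε a))
    -- the colimit Inc-algebra `𝒜 = lim A`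
    (𝒜 : Type) [CommRing 𝒜] [Algebra K 𝒜] (κ : ∀ n, A n →ₐ[K] 𝒜)
    (hκ : ∀ {m n : ℕ} (h : m ≤ n) (a : A m), κ n (Amap (oeLE h) a) = κ m a)
    (hκsurj : ∀ x : 𝒜, ∃ (n : ℕ) (a : A n), κ n a = x)
    (hκeq : ∀ {m n : ℕ} (a : A m) (b : A n), κ m a = κ n b ↔
      ∃ (p : ℕ) (h₁ : m ≤ p) (h₂ : n ≤ p), Amap (oeLE h₁) a = Amap (oeLE h₂) b)
    (actA : Inc → (𝒜 →ₐ[K] 𝒜))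
    (hactA : ∀ (τ : Inc) (n : ℕ) (a : A n),
      actA τ (κ n a) = κ (incWidth τ n) (Amap (incRestrict τ n) a))
    (hactA1 : ∀ a : 𝒜, actA (1 : Inc) a = a)
    (hactAmul : ∀ (σ τ : Inc) (a : 𝒜), actA (σ * τ) a = actA σ (actA τ a))
    (d : ℕ) :
    -- the comparison maps `λ n : F^{OI,d}_n → F^{Inc,d}`, `a e_π ↦ [a] ε_{π̃}` ...
    ∀ lam : ∀ n, ((Fin d ↪o Fin n) →₀ A n) → (OIHomNat d →₀ 𝒜),
      (∀ (n : ℕ) (f : (Fin d ↪o Fin n) →₀ A n),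
        lam n f = f.sum fun π a => Finsupp.single (extendHom π) (κ n a)) →
      -- ... are additive and `A n`-semilinear over `κ n`,
      (∀ (n : ℕ) (f g : (Fin d ↪o Fin n) →₀ A n), lam n (f + g) = lam n f + lam n g) ∧
      (∀ (n : ℕ) (a : A n) (f : (Fin d ↪o Fin n) →₀ A n),
        lam n (a • f) = κ n a • lam n f) ∧
      -- commute with the OI-structure maps of `F^{OI,d}` (cocone compatibility),
      (∀ (m n : ℕ) (h : m ≤ n) (f : (Fin d ↪o Fin m) →₀ A m),
        lam n (f.sum fun π a => Finsupp.single (π.trans (oeLE h)) (Amap (oeLE h) a))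
          = lam m f) ∧
      -- are jointly surjective,
      (∀ y : OIHomNat d →₀ 𝒜, ∃ (n : ℕ) (f : (Fin d ↪o Fin n) →₀ A n), lam n f = y) ∧
      -- identify two elements exactly when they agree in a common width,
      (∀ (m n : ℕ) (f : (Fin d ↪o Fin m) →₀ A m) (g : (Fin d ↪o Fin n) →₀ A n),
        lam m f = lam n g ↔ ∃ (p : ℕ) (h₁ : m ≤ p) (h₂ : n ≤ p),
          (f.sum fun π a => Finsupp.single (π.trans (oeLE h₁)) (Amap (oeLE h₁) a))
            = (g.sum fun π a => Finsupp.single (π.trans (oeLE h₂)) (Amap (oeLE h₂) a))) ∧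
      -- and intertwine the OI-structure maps along `τ·id_n` with the Inc-action
      -- `τ·(a ε_π) = (τ·a) ε_{τ∘π}` of `F^{Inc,d}`:
      (∀ (τ : Inc) (n : ℕ) (f : (Fin d ↪o Fin n) →₀ A n),
        ((lam n f).sum fun π a => Finsupp.single (incAct τ π) (actA τ a))
          = lam (incWidth τ n)
              (f.sum fun π a =>
                Finsupp.single (π.trans (incRestrict τ n)) (Amap (incRestrict τ n) a))) :=
  stmt_13_general A Amap hAcomp 𝒜 κ hκ hκsurj hκeq actA hactA d
end

section
/- Let A be an OI-algebra over a commutative ring K with colimit 𝒜 = lim A. If M is a finitely generated OI-module over A, then its colimit ℳ = lim M is a finitely generated Inc-module over 𝒜. -/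
section Colim

variable {K : Type} [CommRing K]

/-- An OI-module over an OI-algebra `A` (unbundled): width components, functorial
structure maps, and compatibility with the `A`-module structures. -/
structure OIMod (K : Type) [CommRing K] (A : ℕ → Type) [∀ n, CommRing (A n)]
    [∀ n, Algebra K (A n)]
    (Amap : ∀ {m n : ℕ}, (Fin m ↪o Fin n) → (A m →ₐ[K] A n)) where
  M : ℕ → Type
  [acg : ∀ n, AddCommGroup (M n)]
  [mod : ∀ n, Module (A n) (M n)]
  map : ∀ {m n : ℕ}, (Fin m ↪o Fin n) → (M m →+ M n)
  map_id : ∀ (n : ℕ) (x : M n), map (oeId n) x = x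
  map_comp : ∀ {m n p : ℕ} (ε : Fin m ↪o Fin n) (δ : Fin n ↪o Fin p) (x : M m),
    map (ε.trans δ) x = map δ (map ε x)
  map_smul : ∀ {m n : ℕ} (ε : Fin m ↪o Fin n) (a : A m) (x : M m),
    map ε (a • x) = Amap ε a • map ε x

attribute [instance] OIMod.acg OIMod.mod

/-- Presentation of an additive group `ℳ` as the colimit `lim M` of an OI-module
`M` along the direct system induced by the inclusions `ι_{m,n}`. -/
structure ColimPres {A : ℕ → Type} [∀ n, CommRing (A n)] [∀ n, Algebra K (A n)]
    {Amap : ∀ {m n : ℕ}, (Fin m ↪o Fin n) → (A m →ₐ[K] A n)}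
    (D : OIMod K A @Amap) (ℳ : Type) [AddCommGroup ℳ] where
  μ : ∀ n, D.M n →+ ℳ
  compat : ∀ {m n : ℕ} (h : m ≤ n) (x : D.M m), μ n (D.map (oeLE h) x) = μ m x
  jointSurj : ∀ q : ℳ, ∃ (n : ℕ) (x : D.M n), μ n x = q
  eq_iff : ∀ {m n : ℕ} (x : D.M m) (y : D.M n), μ m x = μ n y ↔
    ∃ (p : ℕ) (h₁ : m ≤ p) (h₂ : n ≤ p), D.map (oeLE h₁) x = D.map (oeLE h₂) y

end Colim

/-! The images in `ℳ` of OI-generators of `M` generate `ℳ` as an Inc-module. Indeed, every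
OI-morphism `ε : [m] → [n]` factors as `τ·id_m` for some `τ ∈ Inc` followed by an inclusion
`ι`, so the preimages in the `M_n` of an Inc-stable submodule of `ℳ` form an OI-submodule of `M`
containing the generators, hence everything. -/
/-- Past `m` the extension continues above `n`: it stays strictly increasing and its restriction
to `[m]` still lands in `[n]`. -/
def Inc.extend {m n : ℕ} (ε : Fin m ↪o Fin n) : Inc :=
  ⟨fun j => if h : j < m then (ε ⟨j, h⟩ : ℕ) else n + (j - m), by
    intro a b hab
    by_cases hb : b < m
    · have ha : a < m := hab.trans hb
      simpa [ha, hb] using ε.strictMono (show (⟨a, ha⟩ : Fin m) < ⟨b, hb⟩ from hab)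
    · by_cases ha : a < m
      · simp only [dif_pos ha, dif_neg hb]
        exact (ε ⟨a, ha⟩).isLt.trans_le (Nat.le_add_right n _)
      · simp only [dif_neg ha, dif_neg hb]
        omega⟩

lemma incWidth_extend_le {m n : ℕ} (ε : Fin m ↪o Fin n) : incWidth (Inc.extend ε) m ≤ n := by
  cases m with
  | zero => exact Nat.zero_le n
  | succ p =>
    show (if h : p < p + 1 then (ε ⟨p, h⟩ : ℕ) else n + (p - (p + 1))) + 1 ≤ n
    rw [dif_pos p.lt_succ_self]
    exact (ε ⟨p, p.lt_succ_self⟩).isLt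

lemma incRestrict_extend_trans_oeLE {m n : ℕ} (ε : Fin m ↪o Fin n) :
    (incRestrict (Inc.extend ε) m).trans (oeLE (incWidth_extend_le ε)) = ε := by
  ext j
  show (if h : (j : ℕ) < m then (ε ⟨j, h⟩ : ℕ) else n + ((j : ℕ) - m)) = ε j
  rw [dif_pos j.isLt]

namespace ColimPres

variable {K : Type} [CommRing K] {A : ℕ → Type} [∀ n, CommRing (A n)] [∀ n, Algebra K (A n)]
  {Amap : ∀ {m n : ℕ}, (Fin m ↪o Fin n) → (A m →ₐ[K] A n)} {M : OIMod K A @Amap}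
  {ℳ : Type} [AddCommGroup ℳ] (c : ColimPres M ℳ)

lemma μ_map_eq_act (actM : Inc → (ℳ →+ ℳ))
    (hactM : ∀ (τ : Inc) (n : ℕ) (x : M.M n),
      actM τ (c.μ n x) = c.μ (incWidth τ n) (M.map (incRestrict τ n) x))
    {m n : ℕ} (ε : Fin m ↪o Fin n) (x : M.M m) :
    c.μ n (M.map ε x) = actM (Inc.extend ε) (c.μ m x) := by
  conv_lhs => rw [← incRestrict_extend_trans_oeLE ε]
  rw [M.map_comp, c.compat, hactM]

variable {𝒜 : Type} [CommRing 𝒜] [Module 𝒜 ℳ] (κ : ∀ n, A n →+* 𝒜)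

lemma μ_smul
    (hsmul : ∀ (m n : ℕ) (a : A m) (x : M.M n),
      κ m a • c.μ n x = c.μ (max m n)
        (Amap (oeLE (le_max_left m n)) a • M.map (oeLE (le_max_right m n)) x))
    {n : ℕ} (a : A n) (x : M.M n) : c.μ n (a • x) = κ n a • c.μ n x := by
  rw [hsmul, ← M.map_smul, c.compat]

def μSemilinear
    (hsmul : ∀ (m n : ℕ) (a : A m) (x : M.M n),
      κ m a • c.μ n x = c.μ (max m n)
        (Amap (oeLE (le_max_left m n)) a • M.map (oeLE (le_max_right m n)) x))
    (n : ℕ) : M.M n →ₛₗ[κ n] ℳ where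
  toFun := c.μ n
  map_add' := map_add (c.μ n)
  map_smul' := c.μ_smul κ hsmul

end ColimPres

theorem stmt_14_general {K : Type} [CommRing K]
    (A : ℕ → Type) [∀ n, CommRing (A n)] [∀ n, Algebra K (A n)]
    (Amap : ∀ {m n : ℕ}, (Fin m ↪o Fin n) → (A m →ₐ[K] A n))
    -- the colimit Inc-algebra `𝒜 = lim A`
    (𝒜 : Type) [CommRing 𝒜] [Algebra K 𝒜] (κ : ∀ n, A n →ₐ[K] 𝒜)
    -- the OI-module `M` and its colimit `ℳ = lim M`
    (M : OIMod K A @Amap)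
    (ℳ : Type) [AddCommGroup ℳ] [Module 𝒜 ℳ] (c : ColimPres M ℳ)
    (hsmul : ∀ (m n : ℕ) (a : A m) (x : M.M n),
      κ m a • c.μ n x = c.μ (max m n)
        (Amap (oeLE (le_max_left m n)) a • M.map (oeLE (le_max_right m n)) x))
    (actM : Inc → (ℳ →+ ℳ))
    (hactM : ∀ (τ : Inc) (n : ℕ) (x : M.M n),
      actM τ (c.μ n x) = c.μ (incWidth τ n) (M.map (incRestrict τ n) x))
    -- `M` is a finitely generated OI-module
    (hfg : ∃ (k : ℕ) (w : Fin k → ℕ) (g : ∀ i, M.M (w i)),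
      ∀ S : ∀ n, Submodule (A n) (M.M n),
        (∀ (m n : ℕ) (ε : Fin m ↪o Fin n) (x : M.M m), x ∈ S m → M.map ε x ∈ S n) →
        (∀ i, g i ∈ S (w i)) →
        ∀ (n : ℕ) (x : M.M n), x ∈ S n) :
    -- then `ℳ` is a finitely generated Inc-module over `𝒜`
    ∃ (k : ℕ) (q : Fin k → ℳ),
      ∀ S : Submodule 𝒜 ℳ,
        (∀ (τ : Inc) (x : ℳ), x ∈ S → actM τ x ∈ S) →
        (∀ i, q i ∈ S) →
        ∀ x : ℳ, x ∈ S := by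
  obtain ⟨k, w, g, hgen⟩ := hfg
  refine ⟨k, fun i => c.μ (w i) (g i), fun S hS hgS x => ?_⟩
  obtain ⟨n, y, rfl⟩ := c.jointSurj x
  let f n := c.μSemilinear (fun n => (κ n : A n →+* 𝒜)) hsmul n
  have hOI (m n : ℕ) (ε : Fin m ↪o Fin n) (x : M.M m) (hx : x ∈ S.comap (f m)) :
      M.map ε x ∈ S.comap (f n) := by
    rw [Submodule.mem_comap] at hx ⊢
    exact (c.μ_map_eq_act actM hactM ε x).symm ▸ hS _ _ hx
  exact hgen (fun n => S.comap (f n)) hOI hgS n y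

/-- Let `A` be an OI-algebra over a commutative ring `K` with
colimit `𝒜 = lim A` (an Inc-algebra). If `M` is a finitely generated OI-module over
`A`, then its colimit `ℳ = lim M` — with the `𝒜`-module structure
`[a]·[q] = [A(ι_{m,k})(a)·M(ι_{n,k})(q)]` and Inc-action `τ·[q] = [M(τ·id_n)(q)]` —
is a finitely generated Inc-module over `𝒜`: there are finitely many elements of
`ℳ` contained in no proper Inc-stable submodule. -/
theorem stmt_14 {K : Type} [CommRing K]
    (A : ℕ → Type) [∀ n, CommRing (A n)] [∀ n, Algebra K (A n)]
    (Amap : ∀ {m n : ℕ}, (Fin m ↪o Fin n) → (A m →ₐ[K] A n))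
    (hAid : ∀ (n : ℕ) (a : A n), Amap (oeId n) a = a)
    (hAcomp : ∀ {m n p : ℕ} (ε : Fin m ↪o Fin n) (δ : Fin n ↪o Fin p) (a : A m),
      Amap (ε.trans δ) a = Amap δ (Amap ε a))
    -- the colimit Inc-algebra `𝒜 = lim A`
    (𝒜 : Type) [CommRing 𝒜] [Algebra K 𝒜] (κ : ∀ n, A n →ₐ[K] 𝒜)
    (hκ : ∀ {m n : ℕ} (h : m ≤ n) (a : A m), κ n (Amap (oeLE h) a) = κ m a)
    (hκsurj : ∀ x : 𝒜, ∃ (n : ℕ) (a : A n), κ n a = x)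
    (hκeq : ∀ {m n : ℕ} (a : A m) (b : A n), κ m a = κ n b ↔
      ∃ (p : ℕ) (h₁ : m ≤ p) (h₂ : n ≤ p), Amap (oeLE h₁) a = Amap (oeLE h₂) b)
    (actA : Inc → (𝒜 →ₐ[K] 𝒜))
    (hactA : ∀ (τ : Inc) (n : ℕ) (a : A n),
      actA τ (κ n a) = κ (incWidth τ n) (Amap (incRestrict τ n) a))
    -- the OI-module `M` and its colimit `ℳ = lim M`
    (M : OIMod K A @Amap)
    (ℳ : Type) [AddCommGroup ℳ] [Module 𝒜 ℳ] (c : ColimPres M ℳ)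
    (hsmul : ∀ (m n : ℕ) (a : A m) (x : M.M n),
      κ m a • c.μ n x = c.μ (max m n)
        (Amap (oeLE (le_max_left m n)) a • M.map (oeLE (le_max_right m n)) x))
    (actM : Inc → (ℳ →+ ℳ))
    (hactM : ∀ (τ : Inc) (n : ℕ) (x : M.M n),
      actM τ (c.μ n x) = c.μ (incWidth τ n) (M.map (incRestrict τ n) x))
    -- `M` is a finitely generated OI-module
    (hfg : ∃ (k : ℕ) (w : Fin k → ℕ) (g : ∀ i, M.M (w i)),
      ∀ S : ∀ n, Submodule (A n) (M.M n),
        (∀ (m n : ℕ) (ε : Fin m ↪o Fin n) (x : M.M m), x ∈ S m → M.map ε x ∈ S n) →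
        (∀ i, g i ∈ S (w i)) →
        ∀ (n : ℕ) (x : M.M n), x ∈ S n) :
    -- then `ℳ` is a finitely generated Inc-module over `𝒜`
    ∃ (k : ℕ) (q : Fin k → ℳ),
      ∀ S : Submodule 𝒜 ℳ,
        (∀ (τ : Inc) (x : ℳ), x ∈ S → actM τ x ∈ S) →
        (∀ i, q i ∈ S) →
        ∀ x : ℳ, x ∈ S :=
  stmt_14_general A Amap 𝒜 κ M ℳ c hsmul actM hactM hfg
end

section
/- Let K be a Noetherian commutative ring and c ≥ 1. Then every finitely generated free Inc-module over the Inc-algebra 𝒫 = K[x_{i,j} : i ∈ [c], j ∈ ℕ] is Noetherian, i.e., every Inc-submodule of a finite direct sum ⊕_{i=1}^r F^{Inc,d_i} is generated by a finite subset as an Inc-module. -/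
/-- The polynomial ring `𝒫 = K[x_{i,j} : i ∈ [c], j ∈ ℕ]` in `c` rows of infinitely
many variables. -/
abbrev PInf (K : Type) [CommRing K] (c : ℕ) := MvPolynomial (Fin c × ℕ) K

/-- The Inc-algebra action of `τ ∈ Inc` on `𝒫`, induced by `τ·x_{i,j} = x_{i,τ(j)}`. -/
noncomputable def incP (K : Type) [CommRing K] (c : ℕ) (τ : Inc) :
    PInf K c →ₐ[K] PInf K c :=
  MvPolynomial.rename (fun p => (p.1, τ.1 p.2))

/-- The finitely generated free Inc-module `ℱ = ⊕_{i=1}^r F^{Inc,d_i}` over `𝒫`: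
the free `𝒫`-module with basis `ε_{π,i}` indexed by pairs `(i, π)` with
`π ∈ Hom_OI([d_i], ℕ)`. -/
abbrev FreeIncP (K : Type) [CommRing K] (c : ℕ) {r : ℕ} (d : Fin r → ℕ) : Type :=
  (Σ i : Fin r, OIHomNat (d i)) →₀ PInf K c

/-- The Inc-action on the free Inc-module `ℱ`, induced by
`τ·(a ε_{π,i}) = (τ·a) ε_{τ∘π,i}`. -/
noncomputable def freeIncPAct (K : Type) [CommRing K] (c : ℕ) {r : ℕ}
    {d : Fin r → ℕ} (τ : Inc) (f : FreeIncP K c d) : FreeIncP K c d :=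
  f.sum fun p a => Finsupp.single ⟨p.1, incAct τ p.2⟩ (incP K c τ a)

/-!
Order the monomials `x^u ε_π` of `ℱ` by a well-order for which multiplication by a monomial
and the action of each `τ ∈ Inc` are strictly monotone. For a submodule `S` and a monomial `e`,
the coefficients at `e` of the elements of `S` all of whose monomials are `≤ e` form an ideal
of `K`. For Inc-stable `S` these initial ideals grow along Inc-divisibility of monomials, and
nested submodules with the same initial ideals coincide (cancel the leading term and induct).
Inc-divisibility is a well-quasi-order by Higman's lemma, reading a monomial as the word of its
columns, and `K` is Noetherian, so a monotone family of ideals indexed by monomials cannot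
increase forever. Hence Inc-stable submodules satisfy the ascending chain condition, and a
maximal Inc-span of a finite subset of `S` contains `S`.
-/

theorem List.SublistForall₂.exists_strictMono {α β : Type*} {R : α → β → Prop}
    {l₁ : List α} {l₂ : List β} (h : List.SublistForall₂ R l₁ l₂) :
    ∃ φ : ℕ → ℕ, StrictMono φ ∧
      ∀ j (hj : j < l₁.length), ∃ hj' : φ j < l₂.length, R l₁[j] l₂[φ j] := by
  induction h with
  | nil => exact ⟨id, strictMono_id, fun j hj => absurd hj (Nat.not_lt_zero j)⟩
  | cons hab _ ih =>
    obtain ⟨φ, hφ, hR⟩ := ih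
    refine ⟨Nat.rec 0 fun j _ => φ j + 1, strictMono_nat_of_lt_succ fun j => ?_, ?_⟩
    · cases j with
      | zero => exact Nat.succ_pos _
      | succ j => exact Nat.succ_lt_succ (hφ j.lt_succ_self)
    · rintro (_ | j) hj
      · exact ⟨by simp, hab⟩
      · obtain ⟨hj', hr⟩ := hR j (by simpa using hj)
        exact ⟨by simpa using hj', by simpa using hr⟩
  | cons_right _ ih =>
    obtain ⟨φ, hφ, hR⟩ := ih
    refine ⟨fun j => φ j + 1, fun a b hab => Nat.succ_lt_succ (hφ hab), fun j hj => ?_⟩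
    obtain ⟨hj', hr⟩ := hR j hj
    exact ⟨by simpa using hj', by simpa using hr⟩

/-- Higman's lemma, for finite words `(n, w)` (the letters `w 0, …, w (n-1)`) over a
well-quasi-ordered alphabet, embedded letterwise along strictly increasing maps `ℕ → ℕ`. -/
theorem wellQuasiOrdered_exists_strictMono_le {α : Type*} [Preorder α] [WellQuasiOrderedLE α] :
    WellQuasiOrdered fun x y : ℕ × (ℕ → α) =>
      ∃ φ : ℕ → ℕ, StrictMono φ ∧ ∀ j < x.1, x.2 j ≤ y.2 (φ j) := by
  have higman : WellQuasiOrdered (List.SublistForall₂ (α := α) (· ≤ ·)) := by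
    rw [← Set.partiallyWellOrderedOn_univ_iff]
    simpa using Set.PartiallyWellOrderedOn.partiallyWellOrderedOn_sublistForall₂ (· ≤ ·)
      (Set.isPWO_univ_iff.2 inferInstance)
  intro x
  obtain ⟨a, b, hab, hsub⟩ := higman fun n => List.ofFn fun j : Fin (x n).1 => (x n).2 j
  obtain ⟨φ, hφ, hle⟩ := hsub.exists_strictMono
  refine ⟨a, b, hab, φ, hφ, fun j hj => ?_⟩
  obtain ⟨hj', h⟩ := hle j (by simpa using hj)
  simpa using h

theorem WellQuasiOrdered.wellFoundedGT_monotone {P Q : Type*} [PartialOrder Q]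
    [WellFoundedGT Q] {rel : P → P → Prop} [IsPreorder P rel] (hrel : WellQuasiOrdered rel) :
    WellFoundedGT {F : P → Q // ∀ a b, rel a b → F a ≤ F b} := by
  rw [WellFoundedGT, isWellFounded_iff, RelEmbedding.wellFounded_iff_isEmpty]
  refine ⟨fun F => ?_⟩
  have hF : StrictMono F := fun a b h => F.map_rel_iff.2 h
  have hjump : ∀ n, ∃ a, (F n).1 a < (F (n + 1)).1 a := fun n =>
    (Pi.lt_def.1 (hF n.lt_succ_self)).2
  choose e he using hjump
  -- along a `rel`-monotone subsequence of the jump points `e n`, the jumps form a strictly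
  -- increasing chain in `Q`
  obtain ⟨g, hg⟩ := hrel.exists_monotone_subseq e
  refine not_strictMono_of_wellFoundedGT (fun k => (F (g k + 1)).1 (e (g k)))
    (strictMono_nat_of_lt_succ fun k => ?_)
  calc (F (g k + 1)).1 (e (g k))
      ≤ (F (g (k + 1))).1 (e (g k)) := hF.monotone (g.strictMono k.lt_succ_self) _
    _ ≤ (F (g (k + 1))).1 (e (g (k + 1))) := (F _).2 _ _ (hg _ _ k.le_succ)
    _ < (F (g (k + 1) + 1)).1 (e (g (k + 1))) := he _

theorem Finsupp.Colex.toColex_mapDomain_lt_toColex_mapDomain {α N : Type*} [LinearOrder α]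
    [AddCommMonoid N] [LT N] {g : α → α} (hg : StrictMono g) {u v : α →₀ N}
    (h : toColex u < toColex v) : toColex (u.mapDomain g) < toColex (v.mapDomain g) := by
  obtain ⟨i, hi, hlt⟩ := Finsupp.Colex.lt_iff.1 h
  refine Finsupp.Colex.lt_iff.2 ⟨g i, fun j hj => ?_, ?_⟩
  · by_cases hj' : j ∈ Set.range g
    · obtain ⟨j, rfl⟩ := hj'
      simpa [Finsupp.mapDomain_apply hg.injective] using hi j (hg.lt_iff_lt.1 hj)
    · simp [Finsupp.mapDomain_of_notMem_range _ _ hj']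
  · simpa [Finsupp.mapDomain_apply hg.injective] using hlt

theorem Prod.Lex.strictMono_map {α β γ δ : Type*} [Preorder α] [Preorder β] [Preorder γ]
    [Preorder δ] {f : α → γ} {g : β → δ} (hf : StrictMono f) (hg : StrictMono g) :
    StrictMono fun x : α ×ₗ β => toLex (f (ofLex x).1, g (ofLex x).2) := by
  intro x y h
  rcases Prod.Lex.lt_iff.1 h with h | ⟨h1, h2⟩
  · exact Prod.Lex.toLex_lt_toLex.2 (Or.inl (hf h))
  · exact Prod.Lex.toLex_lt_toLex.2 (Or.inr ⟨congrArg f h1, hg h2⟩)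

theorem Finsupp.mapDomain_le_of_forall_le {α β M : Type*} [AddCommMonoid M] [PartialOrder M]
    [CanonicallyOrderedAdd M] {g : α → β} (hg : Function.Injective g) {u : α →₀ M}
    {v : β →₀ M} (h : ∀ a, u a ≤ v (g a)) : u.mapDomain g ≤ v := by
  intro b
  by_cases hb : b ∈ Set.range g
  · obtain ⟨a, rfl⟩ := hb
    rw [Finsupp.mapDomain_apply hg]
    exact h a
  · rw [Finsupp.mapDomain_of_notMem_range _ _ hb]
    exact zero_le

theorem StrictMono.eq_of_forall_mem_range {α : Type*} [LinearOrder α] {n : ℕ}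
    {π π' : Fin n → α} (hπ : StrictMono π) (hπ' : StrictMono π') (h : ∀ k, π k ∈ Set.range π') :
    π = π' := by
  classical
  have hcard : (Finset.univ.image π').card = n := by
    simp [Finset.card_image_of_injective _ hπ'.injective]
  exact (Finset.orderEmbOfFin_unique hcard (fun k => by simpa using h k) hπ).trans
    (Finset.orderEmbOfFin_unique hcard (fun k => by simp) hπ').symm

instance : WellFoundedLT (Colex (Finset ℕ)) :=
  Finset.orderIsoColex.symm.strictMono.wellFoundedLT

open MvPolynomial

namespace Inc

variable {c r : ℕ} {d : Fin r → ℕ}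

def varMap (τ : Inc) (p : Fin c × ℕ) : Fin c × ℕ := (p.1, τ.1 p.2)

def idxMap (d : Fin r → ℕ) (τ : Inc) (σ : Σ i, OIHomNat (d i)) : Σ i, OIHomNat (d i) :=
  ⟨σ.1, incAct τ σ.2⟩

theorem varMap_injective (τ : Inc) : Function.Injective (τ.varMap (c := c)) := by
  intro p q h
  simp only [varMap, Prod.mk.injEq] at h
  exact Prod.ext h.1 (τ.2.injective h.2)

theorem idxMap_injective (τ : Inc) : Function.Injective (τ.idxMap d) := by
  rintro ⟨i, π⟩ ⟨i', π'⟩ h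
  obtain ⟨rfl, h⟩ := Sigma.mk.inj_iff.1 h
  have hπ : τ.1 ∘ π.1 = τ.1 ∘ π'.1 := congrArg Subtype.val (eq_of_heq h)
  rw [Subtype.ext (τ.2.injective.comp_left hπ)]

end Inc

section IncAction

variable {K : Type} [CommRing K] {c r : ℕ} {d : Fin r → ℕ}

theorem incP_eq_rename (τ : Inc) : incP K c τ = rename τ.varMap := rfl

theorem incP_mul (τ τ' : Inc) (p : PInf K c) :
    incP K c τ (incP K c τ' p) = incP K c (τ * τ') p := by
  rw [incP_eq_rename, incP_eq_rename, rename_rename]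
  rfl

theorem incP_one (p : PInf K c) : incP K c 1 p = p := rename_id_apply p

theorem freeIncPAct_eq (τ : Inc) (f : FreeIncP K c d) :
    freeIncPAct K c τ f = (f.mapRange (incP K c τ) (map_zero _)).mapDomain (τ.idxMap d) := by
  rw [Finsupp.mapDomain, Finsupp.sum_mapRange_index fun _ => Finsupp.single_zero _]
  rfl

theorem freeIncPAct_apply_idxMap (τ : Inc) (f : FreeIncP K c d) (σ : Σ i, OIHomNat (d i)) :
    freeIncPAct K c τ f (τ.idxMap d σ) = incP K c τ (f σ) := by
  rw [freeIncPAct_eq, Finsupp.mapDomain_apply τ.idxMap_injective, Finsupp.mapRange_apply]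

theorem freeIncPAct_apply_of_notMem_range (τ : Inc) (f : FreeIncP K c d)
    {σ : Σ i, OIHomNat (d i)} (hσ : σ ∉ Set.range (τ.idxMap d)) :
    freeIncPAct K c τ f σ = 0 := by
  rw [freeIncPAct_eq, Finsupp.mapDomain_of_notMem_range _ _ hσ]

theorem freeIncPAct_zero (τ : Inc) : freeIncPAct K c τ (0 : FreeIncP K c d) = 0 := by
  simp [freeIncPAct_eq]

theorem freeIncPAct_add (τ : Inc) (f g : FreeIncP K c d) :
    freeIncPAct K c τ (f + g) = freeIncPAct K c τ f + freeIncPAct K c τ g := by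
  simp only [freeIncPAct_eq, Finsupp.mapRange_add (map_add _), Finsupp.mapDomain_add]

theorem freeIncPAct_smul (τ : Inc) (p : PInf K c) (f : FreeIncP K c d) :
    freeIncPAct K c τ (p • f) = incP K c τ p • freeIncPAct K c τ f := by
  ext σ
  by_cases hσ : σ ∈ Set.range (τ.idxMap d)
  · obtain ⟨σ, rfl⟩ := hσ
    simp [freeIncPAct_apply_idxMap]
  · simp [freeIncPAct_apply_of_notMem_range _ _ hσ]

theorem freeIncPAct_mul (τ τ' : Inc) (f : FreeIncP K c d) :
    freeIncPAct K c τ (freeIncPAct K c τ' f) = freeIncPAct K c (τ * τ') f := by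
  simp only [freeIncPAct_eq]
  rw [← Finsupp.mapDomain_mapRange _ _ _ (map_zero _) (map_add _), ← Finsupp.mapDomain_comp,
    ← Finsupp.mapRange_comp _ (map_zero _) _ (map_zero _) (by simp)]
  simp only [Function.comp_def, incP_mul]
  rfl

theorem freeIncPAct_one (f : FreeIncP K c d) : freeIncPAct K c 1 f = f :=
  Finsupp.ext fun σ => (freeIncPAct_apply_idxMap 1 f σ).trans (incP_one _)

def IsIncStable (S : Submodule (PInf K c) (FreeIncP K c d)) : Prop :=
  ∀ (τ : Inc) (x : FreeIncP K c d), x ∈ S → freeIncPAct K c τ x ∈ S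

variable (K c d) in
noncomputable def incSpan (A : Set (FreeIncP K c d)) : Submodule (PInf K c) (FreeIncP K c d) :=
  Submodule.span (PInf K c) (⋃ τ : Inc, freeIncPAct K c τ '' A)

theorem subset_incSpan (A : Set (FreeIncP K c d)) : A ⊆ incSpan K c d A := fun a ha =>
  Submodule.subset_span (Set.mem_iUnion.2 ⟨1, a, ha, freeIncPAct_one a⟩)

theorem incSpan_le {A : Set (FreeIncP K c d)} {T : Submodule (PInf K c) (FreeIncP K c d)}
    (hT : IsIncStable T) (hA : A ⊆ T) : incSpan K c d A ≤ T :=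
  Submodule.span_le.2 <| Set.iUnion_subset fun τ =>
    Set.image_subset_iff.2 fun a ha => hT τ a (hA ha)

theorem incSpan_mono {A B : Set (FreeIncP K c d)} (h : A ⊆ B) :
    incSpan K c d A ≤ incSpan K c d B :=
  Submodule.span_mono <| Set.iUnion_mono fun _ => Set.image_mono h

theorem isIncStable_incSpan (A : Set (FreeIncP K c d)) : IsIncStable (incSpan K c d A) := by
  intro τ x hx
  induction hx using Submodule.span_induction with
  | mem y hy =>
    obtain ⟨τ', a, ha, rfl⟩ := Set.mem_iUnion.1 hy
    rw [freeIncPAct_mul]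
    exact Submodule.subset_span (Set.mem_iUnion.2 ⟨τ * τ', a, ha, rfl⟩)
  | zero => simp [freeIncPAct_zero]
  | add y z _ _ hy hz => rw [freeIncPAct_add]; exact Submodule.add_mem _ hy hz
  | smul p y _ hy => rw [freeIncPAct_smul]; exact Submodule.smul_mem _ _ hy

end IncAction

/-- The monomial `x^exp ε_idx` of `ℱ`. -/
structure FreeMon (c : ℕ) {r : ℕ} (d : Fin r → ℕ) where
  idx : Σ i : Fin r, OIHomNat (d i)
  exp : (Fin c × ℕ) →₀ ℕ

namespace FreeMon

variable {c r : ℕ} {d : Fin r → ℕ}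

section Coefficients

variable {K : Type} [CommRing K]

noncomputable def coeff (e : FreeMon c d) : FreeIncP K c d →ₗ[K] K :=
  MvPolynomial.lcoeff K e.exp ∘ₗ Finsupp.lapply e.idx

theorem coeff_apply (e : FreeMon c d) (f : FreeIncP K c d) :
    e.coeff f = (f e.idx).coeff e.exp := rfl

theorem finite_setOf_coeff_ne_zero (f : FreeIncP K c d) :
    {e : FreeMon c d | e.coeff f ≠ 0}.Finite := by
  refine (f.support.finite_toSet.biUnion fun σ _ =>
    ((f σ).support.finite_toSet.image (FreeMon.mk σ))).subset fun e he => ?_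
  have hσ : f e.idx ≠ 0 := fun h => he (by simp [coeff_apply, h])
  exact Set.mem_biUnion (Finsupp.mem_support_iff.2 hσ)
    ⟨e.exp, MvPolynomial.mem_support_iff.2 he, rfl⟩

theorem exists_coeff_ne_zero {f : FreeIncP K c d} (hf : f ≠ 0) :
    ∃ e : FreeMon c d, e.coeff f ≠ 0 := by
  obtain ⟨σ, hσ⟩ := Finsupp.ne_iff.1 hf
  obtain ⟨u, hu⟩ := MvPolynomial.ne_zero_iff.1 hσ
  exact ⟨⟨σ, u⟩, hu⟩

/-- The monomial `x^m · τ(x^u ε_π)`. -/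
noncomputable def shift (τ : Inc) (m : (Fin c × ℕ) →₀ ℕ) (e : FreeMon c d) : FreeMon c d :=
  ⟨τ.idxMap d e.idx, m + e.exp.mapDomain τ.varMap⟩

theorem coeff_shift (τ : Inc) (m : (Fin c × ℕ) →₀ ℕ) (e : FreeMon c d) (f : FreeIncP K c d) :
    (e.shift τ m).coeff ((monomial m 1 : PInf K c) • freeIncPAct K c τ f) = e.coeff f := by
  rw [coeff_apply, coeff_apply, shift, Finsupp.smul_apply, freeIncPAct_apply_idxMap, smul_eq_mul,
    coeff_monomial_mul, one_mul, incP_eq_rename, coeff_rename_mapDomain _ τ.varMap_injective]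

theorem exists_shift_eq_of_coeff_ne_zero {τ : Inc} {m : (Fin c × ℕ) →₀ ℕ} {f : FreeIncP K c d}
    {e' : FreeMon c d} (h : e'.coeff ((monomial m 1 : PInf K c) • freeIncPAct K c τ f) ≠ 0) :
    ∃ e : FreeMon c d, e.coeff f ≠ 0 ∧ e.shift τ m = e' := by
  obtain ⟨σ', v⟩ := e'
  rw [coeff_apply, Finsupp.smul_apply, smul_eq_mul, coeff_monomial_mul'] at h
  split_ifs at h with hm
  · by_cases hσ' : σ' ∈ Set.range (τ.idxMap d)
    · obtain ⟨σ, rfl⟩ := hσ'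
      rw [one_mul, freeIncPAct_apply_idxMap, incP_eq_rename] at h
      obtain ⟨u, hu, hne⟩ := coeff_rename_ne_zero _ _ _ h
      exact ⟨⟨σ, u⟩, hne, by rw [shift, hu, add_tsub_cancel_of_le hm]⟩
    · simp [freeIncPAct_apply_of_notMem_range _ _ hσ'] at h
  · exact absurd rfl h

end Coefficients

def varLex (c : ℕ) : Fin c × ℕ ≃ Lex (ℕ × Fin c) := (Equiv.prodComm _ _).trans toLex

def colMap (τ : Inc) (x : Lex (ℕ × Fin c)) : Lex (ℕ × Fin c) :=
  toLex (τ.1 (ofLex x).1, (ofLex x).2)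

theorem colMap_strictMono (τ : Inc) : StrictMono (colMap (c := c) τ) :=
  Prod.Lex.strictMono_map τ.2 strictMono_id

noncomputable def embCode {n : ℕ} (π : OIHomNat n) : Colex (Finset ℕ) :=
  toColex (Finset.univ.image π.1)

noncomputable def expCode (u : (Fin c × ℕ) →₀ ℕ) : Colex (Lex (ℕ × Fin c) →₀ ℕ) :=
  toColex (u.equivMapDomain (varLex c))

theorem embCode_injective {n : ℕ} : Function.Injective (embCode (n := n)) := by
  intro π π' h
  have himage : Finset.univ.image π.1 = Finset.univ.image π'.1 := toColex.injective h
  refine Subtype.ext (π.2.eq_of_forall_mem_range π'.2 fun k => ?_)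
  simpa [himage] using Finset.mem_image_of_mem π.1 (Finset.mem_univ k)

theorem expCode_injective : Function.Injective (expCode (c := c)) := fun _ _ h =>
  (Finsupp.equivCongrLeft (varLex c)).injective (toColex.injective h)

theorem embCode_incAct {n : ℕ} (τ : Inc) (π : OIHomNat n) :
    embCode (incAct τ π) = toColex ((ofColex (embCode π)).image τ.1) := by
  simp [embCode, incAct, Finset.image_image]

theorem expCode_shift (τ : Inc) (m u : (Fin c × ℕ) →₀ ℕ) :
    expCode (m + u.mapDomain τ.varMap) =
      expCode m + toColex ((ofColex (expCode u)).mapDomain (colMap τ)) := by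
  simp only [expCode, Finsupp.equivMapDomain_eq_mapDomain, Finsupp.mapDomain_add, toColex_add,
    ofColex_toColex, ← Finsupp.mapDomain_comp]
  rfl

/-- Colex orders compare at the largest differing position, which strictly increasing
reindexing preserves; ordering the variables column first makes `τ` act monotonically on them. -/
noncomputable def key (e : FreeMon c d) :
    Fin r ×ₗ (Colex (Finset ℕ) ×ₗ Colex (Lex (ℕ × Fin c) →₀ ℕ)) :=
  toLex (e.idx.1, toLex (embCode e.idx.2, expCode e.exp))

theorem key_injective : Function.Injective (key (c := c) (d := d)) := by
  rintro ⟨⟨i, π⟩, u⟩ ⟨⟨i', π'⟩, u'⟩ h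
  simp only [key, EmbeddingLike.apply_eq_iff_eq, Prod.mk.injEq] at h
  obtain ⟨rfl, hπ, hu⟩ := h
  rw [embCode_injective hπ, expCode_injective hu]

noncomputable instance : LinearOrder (FreeMon c d) := LinearOrder.lift' key key_injective

instance : WellFoundedLT (FreeMon c d) := StrictMono.wellFoundedLT (f := key) fun _ _ h => h

theorem shift_strictMono (τ : Inc) (m : (Fin c × ℕ) →₀ ℕ) :
    StrictMono (shift (d := d) τ m) := by
  rintro ⟨⟨i, π⟩, u⟩ ⟨⟨i', π'⟩, u'⟩ h
  change key _ < key _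
  change key _ < key _ at h
  simp only [key, shift, Inc.idxMap, Prod.Lex.toLex_lt_toLex] at h ⊢
  rcases h with h | ⟨hi, h | ⟨hπ, hu⟩⟩
  · exact Or.inl h
  · refine Or.inr ⟨hi, Or.inl ?_⟩
    rw [embCode_incAct, embCode_incAct]
    exact Finset.Colex.toColex_image_ofColex_strictMono τ.2 h
  · refine Or.inr ⟨hi, Or.inr ⟨by rw [embCode_incAct, embCode_incAct, hπ], ?_⟩⟩
    rw [expCode_shift, expCode_shift]
    exact add_lt_add_right
      (Finsupp.Colex.toColex_mapDomain_lt_toColex_mapDomain (colMap_strictMono τ) hu) _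

theorem shift_one_zero (e : FreeMon c d) : e.shift 1 0 = e := by
  rw [shift, zero_add, show (Inc.varMap 1 : Fin c × ℕ → Fin c × ℕ) = id from rfl,
    Finsupp.mapDomain_id]
  rfl

theorem shift_shift (τ τ' : Inc) (m m' : (Fin c × ℕ) →₀ ℕ) (e : FreeMon c d) :
    (e.shift τ m).shift τ' m' = e.shift (τ' * τ) (m' + m.mapDomain τ'.varMap) := by
  simp only [shift, Finsupp.mapDomain_add, ← Finsupp.mapDomain_comp, add_assoc]
  rfl

def IncDvd (e e' : FreeMon c d) : Prop :=
  ∃ (τ : Inc) (m : (Fin c × ℕ) →₀ ℕ), e.shift τ m = e'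

instance : IsPreorder (FreeMon c d) IncDvd where
  refl e := ⟨1, 0, shift_one_zero e⟩
  trans _ _ _ := fun ⟨τ, m, h⟩ ⟨τ', m', h'⟩ =>
    ⟨τ' * τ, m' + m.mapDomain τ'.varMap, by rw [← shift_shift, h, h']⟩

def bound (e : FreeMon c d) : ℕ :=
  (e.exp.support.sup fun p => p.2 + 1) + Finset.univ.sup fun k => e.idx.2.1 k + 1

theorem exp_eq_zero_of_bound_le {e : FreeMon c d} {j : ℕ} (hj : e.bound ≤ j) (t : Fin c) :
    e.exp (t, j) = 0 := by
  by_contra h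
  have := Finset.le_sup (f := fun p : Fin c × ℕ => p.2 + 1) (Finsupp.mem_support_iff.2 h)
  simp only [bound] at hj this
  omega

theorem idx_lt_bound (e : FreeMon c d) (k : Fin (d e.idx.1)) : e.idx.2.1 k < e.bound := by
  have := Finset.le_sup (f := fun k => e.idx.2.1 k + 1) (Finset.mem_univ k)
  simp only [bound] at this ⊢
  omega

/-- `x^u ε_π` as the word whose `j`-th letter is the column `j` of `u`, marked when `j` lies in
the image of `π`. -/
noncomputable def word (e : FreeMon c d) : ℕ × (ℕ → (Fin c → ℕ) × ℕ) :=
  (e.bound, fun j => (fun t => e.exp (t, j), (Set.range e.idx.2.1).indicator 1 j))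

theorem incDvd_of_word_le {e e' : FreeMon c d} (hi : e.idx.1 = e'.idx.1) {φ : ℕ → ℕ}
    (hφ : StrictMono φ) (h : ∀ j < e.word.1, e.word.2 j ≤ e'.word.2 (φ j)) : IncDvd e e' := by
  obtain ⟨⟨i, π⟩, u⟩ := e
  obtain ⟨⟨i', π'⟩, u'⟩ := e'
  obtain rfl : i = i' := hi
  let τ : Inc := ⟨φ, hφ⟩
  have hπ : incAct τ π = π' := by
    refine Subtype.ext ((τ.2.comp π.2).eq_of_forall_mem_range π'.2 fun k => ?_)
    have hmark := (h _ (idx_lt_bound ⟨⟨i, π⟩, u⟩ k)).2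
    simp only [word, Pi.one_apply, Set.indicator_of_mem (Set.mem_range_self k)] at hmark
    by_contra hk
    rw [Set.indicator_of_notMem (show φ (π.1 k) ∉ Set.range π'.1 from hk)] at hmark
    exact absurd hmark (by norm_num)
  have hu : u.mapDomain τ.varMap ≤ u' :=
    Finsupp.mapDomain_le_of_forall_le τ.varMap_injective fun ⟨t, j⟩ => by
      by_cases hj : j < bound ⟨⟨i, π⟩, u⟩
      · exact (h j hj).1 t
      · simp [exp_eq_zero_of_bound_le (not_lt.1 hj)]
  exact ⟨τ, u' - u.mapDomain τ.varMap,
    by rw [shift, Inc.idxMap, hπ, tsub_add_cancel_of_le hu]⟩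

theorem wellQuasiOrdered_incDvd : WellQuasiOrdered (IncDvd (c := c) (d := d)) := fun s => by
  obtain ⟨a, b, hab, hi, φ, hφ, h⟩ := (Finite.wellQuasiOrdered (α := Fin r) (· = ·)).prod
    wellQuasiOrdered_exists_strictMono_le fun n => ((s n).idx.1, (s n).word)
  exact ⟨a, b, hab, incDvd_of_word_le hi hφ h⟩

variable {K : Type} [CommRing K]

variable (K) in
noncomputable def boundedBy (e : FreeMon c d) : Submodule K (FreeIncP K c d) :=
  ⨅ (e' : FreeMon c d) (_ : e < e'), LinearMap.ker e'.coeff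

theorem mem_boundedBy {e : FreeMon c d} {f : FreeIncP K c d} :
    f ∈ boundedBy K e ↔ ∀ e', e < e' → e'.coeff f = 0 := by
  simp [boundedBy]

theorem exists_coeff_ne_zero_mem_boundedBy {f : FreeIncP K c d} (hf : f ≠ 0) :
    ∃ e : FreeMon c d, e.coeff f ≠ 0 ∧ f ∈ boundedBy K e := by
  obtain ⟨e, he, hmax⟩ := Set.exists_max_image _ id (finite_setOf_coeff_ne_zero f)
    (exists_coeff_ne_zero hf)
  exact ⟨e, he, mem_boundedBy.2 fun e' hlt => by_contra fun h => (hmax e' h).not_gt hlt⟩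

end FreeMon

open FreeMon

section InitialIdeal

variable {K : Type} [CommRing K] {c r : ℕ} {d : Fin r → ℕ}

/-- The ideal of leading coefficients at `e` of the elements of `S` with leading monomial
at most `e`. -/
noncomputable def initIdeal (S : Submodule (PInf K c) (FreeIncP K c d)) (e : FreeMon c d) :
    Ideal K :=
  ((S.restrictScalars K) ⊓ boundedBy K e).map e.coeff

theorem mem_initIdeal {S : Submodule (PInf K c) (FreeIncP K c d)} {e : FreeMon c d} {a : K} :
    a ∈ initIdeal S e ↔ ∃ f ∈ S, f ∈ boundedBy K e ∧ e.coeff f = a := by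
  simp [initIdeal, and_assoc]

theorem initIdeal_mono {S T : Submodule (PInf K c) (FreeIncP K c d)} (h : S ≤ T)
    (e : FreeMon c d) : initIdeal S e ≤ initIdeal T e :=
  Submodule.map_mono (inf_le_inf_right _ (Submodule.restrictScalars_mono K h))

theorem initIdeal_le_initIdeal_shift {S : Submodule (PInf K c) (FreeIncP K c d)}
    (hS : IsIncStable S) (τ : Inc) (m : (Fin c × ℕ) →₀ ℕ) (e : FreeMon c d) :
    initIdeal S e ≤ initIdeal S (e.shift τ m) := by
  intro a ha
  obtain ⟨f, hfS, hfe, rfl⟩ := mem_initIdeal.1 ha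
  refine mem_initIdeal.2 ⟨_, S.smul_mem (monomial m 1) (hS τ f hfS), ?_, coeff_shift τ m e f⟩
  refine mem_boundedBy.2 fun e' hlt => by_contra fun hne => ?_
  obtain ⟨e₀, he₀, rfl⟩ := exists_shift_eq_of_coeff_ne_zero hne
  exact he₀ (mem_boundedBy.1 hfe e₀ ((shift_strictMono τ m).lt_iff_lt.1 hlt))

theorem le_of_initIdeal_le {S T : Submodule (PInf K c) (FreeIncP K c d)} (hST : S ≤ T)
    (h : ∀ e, initIdeal T e ≤ initIdeal S e) : T ≤ S := by
  suffices hbdd : ∀ e : FreeMon c d, ∀ f ∈ T, f ∈ boundedBy K e → f ∈ S by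
    intro f hf
    by_cases hf0 : f = 0
    · simp [hf0]
    obtain ⟨e, -, he⟩ := exists_coeff_ne_zero_mem_boundedBy hf0
    exact hbdd e f hf he
  intro e
  induction e using WellFoundedLT.induction with
  | _ e ih =>
  intro f hfT hfe
  obtain ⟨g, hgS, hge, hg⟩ := mem_initIdeal.1 (h e (mem_initIdeal.2 ⟨f, hfT, hfe, rfl⟩))
  suffices hfg : f - g ∈ S by simpa using S.add_mem hfg hgS
  by_cases h0 : f - g = 0
  · simp [h0]
  obtain ⟨e', he'ne, he'⟩ := exists_coeff_ne_zero_mem_boundedBy h0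
  have hlt : e' < e := by
    refine lt_of_le_of_ne (not_lt.1 fun hlt => he'ne ?_) fun he => he'ne ?_
    · exact mem_boundedBy.1 ((boundedBy K e).sub_mem hfe hge) e' hlt
    · rw [he, map_sub, hg, sub_self]
  exact ih e' hlt _ (T.sub_mem hfT (hST hgS)) he'

theorem wellFoundedGT_isIncStable [IsNoetherianRing K] :
    WellFoundedGT {S : Submodule (PInf K c) (FreeIncP K c d) // IsIncStable S} := by
  have := (wellQuasiOrdered_incDvd (c := c) (d := d)).wellFoundedGT_monotone (Q := Ideal K)
  let initIdeals : {S : Submodule (PInf K c) (FreeIncP K c d) // IsIncStable S} →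
      {F : FreeMon c d → Ideal K // ∀ a b, IncDvd a b → F a ≤ F b} :=
    fun S => ⟨initIdeal S.1, fun a _ ⟨τ, m, hab⟩ =>
      hab ▸ initIdeal_le_initIdeal_shift S.2 τ m a⟩
  refine StrictMono.wellFoundedGT (f := initIdeals) fun S T hST => ?_
  refine lt_of_le_of_ne (fun e => initIdeal_mono hST.le e) fun h => hST.ne ?_
  exact Subtype.ext (le_antisymm hST.le
    (le_of_initIdeal_le hST.le fun e => (congrArg (fun F => F.1 e) h).ge))

theorem exists_finite_subset_le_incSpan [IsNoetherianRing K]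
    (S : Submodule (PInf K c) (FreeIncP K c d)) :
    ∃ A : Set (FreeIncP K c d), A.Finite ∧ A ⊆ S ∧ S ≤ incSpan K c d A := by
  obtain ⟨_, ⟨A, hAfin, hAS, rfl⟩, hmax⟩ := wellFoundedGT_isIncStable.exists_maximal
    {N | ∃ A : Set (FreeIncP K c d), A.Finite ∧ A ⊆ S ∧
      N = ⟨incSpan K c d A, isIncStable_incSpan A⟩}
    ⟨_, ∅, Set.finite_empty, Set.empty_subset _, rfl⟩
  refine ⟨A, hAfin, hAS, fun x hx => ?_⟩
  have hle := hmax ⟨insert x A, hAfin.insert x, Set.insert_subset hx hAS, rfl⟩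
    (incSpan_mono (Set.subset_insert x A))
  exact hle (subset_incSpan _ (Set.mem_insert x A))

end InitialIdeal

theorem stmt_16_general (K : Type) [CommRing K] [IsNoetherianRing K] (c : ℕ)
    {r : ℕ} (d : Fin r → ℕ) :
    ∀ S : Submodule (PInf K c) (FreeIncP K c d),
      (∀ (τ : Inc) (x : FreeIncP K c d), x ∈ S → freeIncPAct K c τ x ∈ S) →
      ∃ (k : ℕ) (g : Fin k → FreeIncP K c d),
        (∀ i, g i ∈ S) ∧
        ∀ T : Submodule (PInf K c) (FreeIncP K c d),
          (∀ (τ : Inc) (x : FreeIncP K c d), x ∈ T → freeIncPAct K c τ x ∈ T) →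
          (∀ i, g i ∈ T) →
          S ≤ T := by
  intro S _
  obtain ⟨A, hAfin, hAS, hSA⟩ := exists_finite_subset_le_incSpan S
  obtain ⟨k, g, rfl⟩ := hAfin.fin_embedding
  exact ⟨k, g, fun i => hAS ⟨i, rfl⟩,
    fun T hT hgT => hSA.trans (incSpan_le hT (Set.range_subset_iff.2 hgT))⟩

/-- Let `K` be a Noetherian commutative ring and `c ≥ 1`. Every
finitely generated free Inc-module `ℱ = ⊕_{i=1}^r F^{Inc,d_i}` over the Inc-algebra
`𝒫 = K[x_{i,j} : i ∈ [c], j ∈ ℕ]` is Noetherian: every Inc-stable submodule of `ℱ`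
is generated, as an Inc-module, by a finite subset. -/
theorem stmt_16 (K : Type) [CommRing K] [IsNoetherianRing K] (c : ℕ) (hc : 1 ≤ c)
    {r : ℕ} (d : Fin r → ℕ) :
    ∀ S : Submodule (PInf K c) (FreeIncP K c d),
      (∀ (τ : Inc) (x : FreeIncP K c d), x ∈ S → freeIncPAct K c τ x ∈ S) →
      ∃ (k : ℕ) (g : Fin k → FreeIncP K c d),
        (∀ i, g i ∈ S) ∧
        ∀ T : Submodule (PInf K c) (FreeIncP K c d),
          (∀ (τ : Inc) (x : FreeIncP K c d), x ∈ T → freeIncPAct K c τ x ∈ T) →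
          (∀ i, g i ∈ T) →
          S ≤ T :=
  stmt_16_general K c d
end
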